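/- arXiv:1911.03672 — 5 statements merged into one kernel-verified Lean document; each statement's English description precedes it below -/
import Mathlib

section
/- For every α = (α₁,…,α_n) ∈ [0,∞)^n, writing φ₁(α₁) := φ(α₁,0,…,0), one has φ(α) = φ₁(α₁) + φ(0,α₂,…,α_n) + ∫_{[0,∞)^n} (1 − e^{−α₁ x₁}) (1 − e^{−∑_{i=2}^n α_i x_i}) ν(dx), where the integral on the right is finite. -/
open MeasureTheory Filter Set

section Aux

lemma one_sub_exp_le_min (t : ℝ) : 1 - Real.exp (-t) ≤ min t 1 := by
  refine le_min ?_ ?_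
  · have := Real.add_one_le_exp (-t); linarith
  · have := Real.exp_pos (-t); linarith

lemma one_sub_exp_sum_le {ι : Type*} (s : Finset ι) (t : ι → ℝ) (ht : ∀ i ∈ s, 0 ≤ t i) :
    1 - Real.exp (-∑ i ∈ s, t i) ≤ ∑ i ∈ s, min (t i) 1 := by
  classical
  induction s using Finset.induction with
  | empty => simp
  | @insert a s ha ih =>
    rw [Finset.sum_insert ha, Finset.sum_insert ha, neg_add, Real.exp_add]
    have h1 : 1 - Real.exp (-t a) ≤ min (t a) 1 := one_sub_exp_le_min _
    have h2 : 1 - Real.exp (-∑ i ∈ s, t i) ≤ ∑ i ∈ s, min (t i) 1 :=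
      ih fun i hi => ht i (Finset.mem_insert_of_mem hi)
    have e1 : Real.exp (-t a) ≤ 1 :=
      Real.exp_le_one_iff.mpr (by linarith [ht a (Finset.mem_insert_self a s)])
    have e2 : Real.exp (-∑ i ∈ s, t i) ≤ 1 := by
      apply Real.exp_le_one_iff.mpr
      simp only [neg_nonpos]
      exact Finset.sum_nonneg fun i hi => ht i (Finset.mem_insert_of_mem hi)
    have p1 := Real.exp_pos (-t a)
    have p2 := Real.exp_pos (-∑ i ∈ s, t i)
    nlinarith

lemma min_scale {a x : ℝ} (ha : 0 ≤ a) (hx : 0 ≤ x) :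
    min (a * x) 1 ≤ (1 + a) * min x 1 := by
  rcases le_total x 1 with h | h
  · rw [min_eq_left h]
    calc min (a * x) 1 ≤ a * x := min_le_left _ _
    _ ≤ (1 + a) * x := by nlinarith
  · rw [min_eq_right h]
    calc min (a * x) 1 ≤ 1 := min_le_right _ _
    _ ≤ (1 + a) * 1 := by nlinarith

lemma integrable_of_ofReal {X : Type*} [MeasurableSpace X] {μ : Measure X} {f : X → ℝ}
    (hm : AEStronglyMeasurable f μ) (hf : 0 ≤ᵐ[μ] f)
    (h : ∫⁻ x, ENNReal.ofReal (f x) ∂μ < ⊤) : Integrable f μ :=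
  ⟨hm, (hasFiniteIntegral_iff_ofReal hf).mpr h⟩

/-- second-order bound for the compensated exponential -/
lemma exp_compensated_bound {a x : ℝ} (ha : 0 ≤ a) (hx : 0 ≤ x) :
    |Real.exp (-(a * x)) - 1
        + a * x * Set.indicator (Set.Ioc (0:ℝ) 1) (fun _ => (1:ℝ)) x|
      ≤ (a ^ 2 + 1) * min (x ^ 2) 1 := by
  have hax : 0 ≤ a * x := mul_nonneg ha hx
  have hexp1 : Real.exp (-(a * x)) ≤ 1 := Real.exp_le_one_iff.mpr (by linarith)
  have hexp0 := Real.exp_pos (-(a * x))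
  by_cases hmem : x ∈ Set.Ioc (0:ℝ) 1
  · rw [Set.indicator_of_mem hmem, mul_one]
    have hx2 : min (x ^ 2) 1 = x ^ 2 := min_eq_left (by nlinarith [hmem.2, hmem.1.le])
    rw [hx2]
    have key : |Real.exp (-(a * x)) - 1 + a * x| ≤ (a * x) ^ 2 := by
      rcases le_total (a * x) 1 with h1 | h1
      · have := Real.abs_exp_sub_one_sub_id_le (x := -(a * x)) (by rw [abs_neg, abs_of_nonneg hax]; exact h1)
        calc |Real.exp (-(a * x)) - 1 + a * x| = |Real.exp (-(a * x)) - 1 - (-(a * x))| := by ring_nf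
        _ ≤ (-(a * x)) ^ 2 := this
        _ = (a * x) ^ 2 := by ring
      · have hlow : 0 ≤ Real.exp (-(a * x)) - 1 + a * x := by
          have := Real.add_one_le_exp (-(a * x)); linarith
        rw [abs_of_nonneg hlow]
        nlinarith
    calc |Real.exp (-(a * x)) - 1 + a * x| ≤ (a * x) ^ 2 := key
    _ = a ^ 2 * x ^ 2 := by ring
    _ ≤ (a ^ 2 + 1) * x ^ 2 := by nlinarith
  · rw [Set.indicator_of_notMem hmem, mul_zero, add_zero]
    rcases eq_or_lt_of_le hx with h0 | h0
    · simp [← h0]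
    · have hx1 : 1 < x := by
        by_contra h; push_neg at h; exact hmem ⟨h0, h⟩
      have hmin : min (x ^ 2) 1 = 1 := min_eq_right (by nlinarith)
      rw [hmin, mul_one, abs_of_nonpos (by linarith)]
      nlinarith

end Aux

/-- The Laplace exponent
`φ(α) = −∑ᵢ cᵢαᵢ + (σ²/2)α₁² + ∫ (e^{−∑ᵢ αᵢxᵢ} − 1 + α₁x₁1_{(0,1]}(x₁)) ν(dx)`. -/
noncomputable def levyExponent (n : ℕ) [NeZero n] (ν : Measure (Fin n → ℝ))
    (σ : ℝ) (c : Fin n → ℝ) (α : Fin n → ℝ) : ℝ :=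
  -(∑ i, c i * α i) + σ ^ 2 / 2 * (α 0) ^ 2
    + ∫ x, (Real.exp (-∑ i, α i * x i) - 1
        + α 0 * x 0 * Set.indicator (Set.Ioc (0:ℝ) 1) (fun _ => (1:ℝ)) (x 0)) ∂ν

/-- for every `α ∈ [0,∞)^n`, writing `φ₁(α₁) := φ(α₁,0,…,0)`,
`φ(α) = φ₁(α₁) + φ(0,α₂,…,α_n) + ∫ (1 − e^{−α₁x₁})(1 − e^{−∑_{i=2}^n αᵢxᵢ}) ν(dx)`,
where the integral on the right is finite. -/
theorem levy_exponent_decomposition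
    (n : ℕ) [NeZero n] (hn : 2 ≤ n)
    (ν : Measure (Fin n → ℝ))
    (hsupp : ∀ᵐ x ∂ν, ∀ i, 0 ≤ x i)
    (hν0 : ν {0} = 0)
    (hν1 : ∫⁻ x, ENNReal.ofReal (min ((x 0) ^ 2) 1) ∂ν < ⊤)
    (hνi : ∀ i : Fin n, i ≠ 0 → ∫⁻ x, ENNReal.ofReal (min (x i) 1) ∂ν < ⊤)
    (σ : ℝ) (c : Fin n → ℝ)
    (α : Fin n → ℝ) (hα : ∀ i, 0 ≤ α i) :
    Integrable (fun x : Fin n → ℝ =>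
        (1 - Real.exp (-(α 0 * x 0)))
          * (1 - Real.exp (-∑ i ∈ Finset.univ.erase (0 : Fin n), α i * x i))) ν ∧
    levyExponent n ν σ c α
      = levyExponent n ν σ c (fun i => if i = 0 then α 0 else 0)
        + levyExponent n ν σ c (fun i => if i = 0 then 0 else α i)
        + ∫ x, (1 - Real.exp (-(α 0 * x 0)))
            * (1 - Real.exp (-∑ i ∈ Finset.univ.erase (0 : Fin n), α i * x i)) ∂ν := by
  classical
  -- notation
  set I : ℝ → ℝ := Set.indicator (Set.Ioc (0:ℝ) 1) (fun _ => (1:ℝ)) with hI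
  set b : (Fin n → ℝ) → ℝ := fun x => ∑ i ∈ Finset.univ.erase (0 : Fin n), α i * x i with hb
  -- measurability pieces
  have hmeas_b : Measurable b := by
    apply Finset.measurable_sum
    intro i _
    exact (measurable_pi_apply i).const_mul _
  have hmeas_x0 : Measurable fun x : Fin n → ℝ => x 0 := measurable_pi_apply 0
  have hmeasI : Measurable I := Measurable.indicator measurable_const measurableSet_Ioc
  -- integrability of min (x i) 1 for i ≠ 0
  have hint_min : ∀ i : Fin n, i ≠ 0 → Integrable (fun x : Fin n → ℝ => min (x i) 1) ν := by
    intro i hi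
    refine integrable_of_ofReal ?_ ?_ (hνi i hi)
    · exact ((measurable_pi_apply i).min measurable_const).aestronglyMeasurable
    · filter_upwards [hsupp] with x hx
      exact le_min (hx i) zero_le_one
  -- the dominating function for the second factor
  set g : (Fin n → ℝ) → ℝ := fun x => ∑ i ∈ Finset.univ.erase (0 : Fin n), (1 + α i) * min (x i) 1
    with hg
  have hint_g : Integrable g ν := by
    apply integrable_finset_sum
    intro i hi
    exact (hint_min i (Finset.ne_of_mem_erase hi)).const_mul _
  have hbound : ∀ᵐ x ∂ν, 0 ≤ 1 - Real.exp (-b x) ∧ 1 - Real.exp (-b x) ≤ g x := by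
    filter_upwards [hsupp] with x hx
    have hbnn : 0 ≤ b x := Finset.sum_nonneg fun i _ => mul_nonneg (hα i) (hx i)
    constructor
    · have : Real.exp (-b x) ≤ 1 := Real.exp_le_one_iff.mpr (by linarith)
      linarith
    · calc 1 - Real.exp (-b x)
          ≤ ∑ i ∈ Finset.univ.erase (0 : Fin n), min (α i * x i) 1 :=
            one_sub_exp_sum_le _ _ fun i _ => mul_nonneg (hα i) (hx i)
      _ ≤ g x := Finset.sum_le_sum fun i _ => min_scale (hα i) (hx i)
  -- integrability of F₂ := exp(-b) - 1
  have hF2 : Integrable (fun x => Real.exp (-b x) - 1) ν := by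
    refine Integrable.mono' hint_g ?_ ?_
    · exact ((hmeas_b.neg.exp.sub measurable_const)).aestronglyMeasurable
    · filter_upwards [hbound] with x hx
      rw [Real.norm_eq_abs, abs_of_nonpos (by linarith [hx.1])]
      linarith [hx.2]
  -- integrability of the product P
  have hP : Integrable (fun x : Fin n → ℝ =>
      (1 - Real.exp (-(α 0 * x 0))) * (1 - Real.exp (-b x))) ν := by
    refine Integrable.mono' hint_g ?_ ?_
    · exact ((measurable_const.sub ((hmeas_x0.const_mul _).neg.exp)).mul
        (measurable_const.sub hmeas_b.neg.exp)).aestronglyMeasurable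
    · filter_upwards [hbound, hsupp] with x hx hx0
      have h1 : 0 ≤ α 0 * x 0 := mul_nonneg (hα 0) (hx0 0)
      have h2 : Real.exp (-(α 0 * x 0)) ≤ 1 := Real.exp_le_one_iff.mpr (by linarith)
      have h3 := Real.exp_pos (-(α 0 * x 0))
      rw [Real.norm_eq_abs, abs_of_nonneg (mul_nonneg (by linarith) hx.1)]
      calc (1 - Real.exp (-(α 0 * x 0))) * (1 - Real.exp (-b x))
          ≤ 1 * (1 - Real.exp (-b x)) := mul_le_mul_of_nonneg_right (by linarith) hx.1
      _ = 1 - Real.exp (-b x) := one_mul _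
      _ ≤ g x := hx.2
  -- integrability of F₁
  have hint_min0 : Integrable (fun x : Fin n → ℝ => (α 0 ^ 2 + 1) * min ((x 0) ^ 2) 1) ν := by
    refine Integrable.const_mul ?_ _
    refine integrable_of_ofReal ?_ ?_ hν1
    · exact ((hmeas_x0.pow_const 2).min measurable_const).aestronglyMeasurable
    · filter_upwards with x
      exact le_min (sq_nonneg _) zero_le_one
  have hF1 : Integrable (fun x : Fin n → ℝ =>
      Real.exp (-(α 0 * x 0)) - 1 + α 0 * x 0 * I (x 0)) ν := by
    refine Integrable.mono' hint_min0 ?_ ?_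
    · refine Measurable.aestronglyMeasurable ?_
      exact (((hmeas_x0.const_mul _).neg.exp.sub measurable_const).add
        ((hmeas_x0.const_mul _).mul (hmeasI.comp hmeas_x0)))
    · filter_upwards [hsupp] with x hx
      rw [Real.norm_eq_abs]
      exact exp_compensated_bound (hα 0) (hx 0)
  -- sum rewrites
  have hsplit : ∀ x : Fin n → ℝ, ∑ i, α i * x i = α 0 * x 0 + b x := by
    intro x
    exact (Finset.add_sum_erase _ (fun i => α i * x i) (Finset.mem_univ 0)).symm
  have hsum1 : ∀ x : Fin n → ℝ,
      ∑ i, (if i = 0 then α 0 else 0) * x i = α 0 * x 0 := by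
    intro x
    simp [ite_mul]
  have hsum2 : ∀ x : Fin n → ℝ,
      ∑ i, (if i = 0 then 0 else α i) * x i = b x := by
    intro x
    rw [show (∑ i, (if i = 0 then 0 else α i) * x i)
        = (if (0:Fin n) = 0 then 0 else α 0) * x 0
          + ∑ i ∈ Finset.univ.erase (0 : Fin n), (if i = 0 then 0 else α i) * x i from
      (Finset.add_sum_erase _ _ (Finset.mem_univ 0)).symm]
    rw [if_pos rfl, zero_mul, zero_add]
    exact Finset.sum_congr rfl fun i hi => by
      rw [if_neg (Finset.ne_of_mem_erase hi)]
  have hcsum1 : ∑ i, c i * (if i = 0 then α 0 else 0) = c 0 * α 0 := by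
    simp [mul_ite, mul_zero]
  have hcsum2 : ∑ i, c i * (if i = 0 then 0 else α i)
      = ∑ i ∈ Finset.univ.erase (0 : Fin n), c i * α i := by
    rw [show (∑ i, c i * (if i = 0 then 0 else α i))
        = c 0 * (if (0:Fin n) = 0 then 0 else α 0)
          + ∑ i ∈ Finset.univ.erase (0 : Fin n), c i * (if i = 0 then 0 else α i) from
      (Finset.add_sum_erase _ _ (Finset.mem_univ 0)).symm]
    rw [if_pos rfl, mul_zero, zero_add]
    exact Finset.sum_congr rfl fun i hi => by
      rw [if_neg (Finset.ne_of_mem_erase hi)]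
  have hcsplit : ∑ i, c i * α i = c 0 * α 0 + ∑ i ∈ Finset.univ.erase (0 : Fin n), c i * α i :=
    (Finset.add_sum_erase _ (fun i => c i * α i) (Finset.mem_univ 0)).symm
  refine ⟨hP, ?_⟩
  -- rewrite the three levyExponent integrals
  unfold levyExponent
  have hi1 : (∫ x, (Real.exp (-∑ i, (if i = 0 then α 0 else 0) * x i) - 1
      + (if (0 : Fin n) = 0 then α 0 else 0) * x 0 * I (x 0)) ∂ν)
      = ∫ x, (Real.exp (-(α 0 * x 0)) - 1 + α 0 * x 0 * I (x 0)) ∂ν := by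
    apply integral_congr_ae
    filter_upwards with x
    rw [hsum1 x, if_pos rfl]
  have hi2 : (∫ x, (Real.exp (-∑ i, (if i = 0 then 0 else α i) * x i) - 1
      + (if (0 : Fin n) = 0 then 0 else α 0) * x 0 * I (x 0)) ∂ν)
      = ∫ x, (Real.exp (-b x) - 1) ∂ν := by
    apply integral_congr_ae
    filter_upwards with x
    rw [hsum2 x, if_pos rfl]
    ring
  have hi0 : (∫ x, (Real.exp (-∑ i, α i * x i) - 1 + α 0 * x 0 * I (x 0)) ∂ν)
      = (∫ x, (Real.exp (-(α 0 * x 0)) - 1 + α 0 * x 0 * I (x 0)) ∂ν)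
        + (∫ x, (Real.exp (-b x) - 1) ∂ν)
        + ∫ x, (1 - Real.exp (-(α 0 * x 0))) * (1 - Real.exp (-b x)) ∂ν := by
    have hF12 : Integrable (fun x : Fin n → ℝ =>
        (Real.exp (-(α 0 * x 0)) - 1 + α 0 * x 0 * I (x 0)) + (Real.exp (-b x) - 1)) ν :=
      hF1.add hF2
    have step1 : (∫ x, (Real.exp (-∑ i, α i * x i) - 1 + α 0 * x 0 * I (x 0)) ∂ν)
        = ∫ x, (((Real.exp (-(α 0 * x 0)) - 1 + α 0 * x 0 * I (x 0))
              + (Real.exp (-b x) - 1))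
            + (1 - Real.exp (-(α 0 * x 0))) * (1 - Real.exp (-b x))) ∂ν := by
      apply integral_congr_ae
      filter_upwards with x
      rw [hsplit x, neg_add, Real.exp_add]
      ring
    rw [step1, integral_add hF12 hP, integral_add hF1 hF2]
  rw [hi1, hi2, hi0, hcsplit, hcsum1, hcsum2]
  simp only [hb, eq_self_iff_true, if_true, reduceIte]
  ring
end

section
/- Let f : [0,∞) → ℝ be right-continuous, and suppose that at every t > 0 the left limit f(t−) = lim_{s↑t} f(s) exists and f(t−) ≤ f(t) (no negative jumps). Then the running infimum m(t) := inf_{0 ≤ s ≤ t} f(s) is a continuous (and nonincreasing) function of t on [0,∞). -/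
open Filter Set

/-- Auxiliary: a function that is right-continuous on `[0,∞)` and has left limits at
every positive point is bounded below on every `[0,T]`. -/
lemma bddBelow_aux_running_inf (f : ℝ → ℝ)
    (hrc : ∀ t : ℝ, 0 ≤ t → Tendsto f (nhdsWithin t (Set.Ioi t)) (nhds (f t)))
    (hll : ∀ t : ℝ, 0 < t →
        ∃ l : ℝ, Tendsto f (nhdsWithin t (Set.Iio t)) (nhds l) ∧ l ≤ f t) :
    ∀ T : ℝ, 0 ≤ T → BddBelow (f '' Set.Icc 0 T) := by
  intro T hT
  set A : Set ℝ := {s | s ∈ Set.Icc 0 T ∧ BddBelow (f '' Set.Icc 0 s)} with hA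
  have h0 : (0:ℝ) ∈ A := ⟨⟨le_refl 0, hT⟩, by simp⟩
  have hAne : A.Nonempty := ⟨0, h0⟩
  have hAbdd : BddAbove A := ⟨T, fun s hs => hs.1.2⟩
  set S := sSup A with hSdef
  have hS0 : 0 ≤ S := le_csSup hAbdd h0
  have hST : S ≤ T := csSup_le hAne fun s hs => hs.1.2
  have hSbdd : BddBelow (f '' Set.Icc 0 S) := by
    rcases eq_or_lt_of_le hS0 with h | h
    · rw [← h]; simp
    · obtain ⟨l, hl, -⟩ := hll S h
      have hmem : f ⁻¹' Set.Ioi (l - 1) ∈ nhdsWithin S (Set.Iio S) :=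
        hl (Ioi_mem_nhds (by linarith))
      obtain ⟨a, ha, hsub⟩ := mem_nhdsLT_iff_exists_Ioo_subset.1 hmem
      obtain ⟨s, hsA, has⟩ := exists_lt_of_lt_csSup hAne (show a < S from ha)
      obtain ⟨c, hc⟩ := hsA.2
      refine ⟨min c (min (l - 1) (f S)), ?_⟩
      rintro y ⟨u, hu, rfl⟩
      rcases le_or_gt u s with hus | hus
      · have : f u ∈ f '' Set.Icc 0 s := ⟨u, ⟨hu.1, hus⟩, rfl⟩
        exact le_trans (min_le_left _ _) (hc this)
      · rcases eq_or_lt_of_le hu.2 with hu2 | hu2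
        · rw [hu2]
          exact le_trans (min_le_right _ _) (min_le_right _ _)
        · have : u ∈ Set.Ioo a S := ⟨lt_trans has hus, hu2⟩
          have := hsub this
          simp only [Set.mem_preimage, Set.mem_Ioi] at this
          exact le_trans (min_le_right _ _)
            (le_trans (min_le_left _ _) (le_of_lt this))
  have hSeqT : S = T := by
    by_contra hne
    have hSlt : S < T := lt_of_le_of_ne hST hne
    have hmem : f ⁻¹' Set.Ioi (f S - 1) ∈ nhdsWithin S (Set.Ioi S) :=
      hrc S hS0 (Ioi_mem_nhds (by linarith))
    obtain ⟨b, hb, hsub⟩ := mem_nhdsGT_iff_exists_Ioo_subset.1 hmem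
    simp only [Set.mem_Ioi] at hb
    set t := min T ((S + b) / 2) with htdef
    have htS : S < t := lt_min hSlt (by linarith)
    have htb : t < b := lt_of_le_of_lt (min_le_right _ _) (by linarith)
    have htT : t ≤ T := min_le_left _ _
    have ht0 : 0 ≤ t := le_trans hS0 htS.le
    have htA : t ∈ A := by
      refine ⟨⟨ht0, htT⟩, ?_⟩
      obtain ⟨c, hc⟩ := hSbdd
      refine ⟨min c (f S - 1), ?_⟩
      rintro y ⟨u, hu, rfl⟩
      rcases le_or_gt u S with hus | hus
      · exact le_trans (min_le_left _ _) (hc ⟨u, ⟨hu.1, hus⟩, rfl⟩)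
      · have : u ∈ Set.Ioo S b := ⟨hus, lt_of_le_of_lt hu.2 htb⟩
        have := hsub this
        simp only [Set.mem_preimage, Set.mem_Ioi] at this
        exact le_trans (min_le_right _ _) (le_of_lt this)
    exact absurd (le_csSup hAbdd htA) (not_le.2 htS)
  rw [← hSeqT]
  exact hSbdd

/-- let `f : [0,∞) → ℝ` be right-continuous such that at every `t > 0`
the left limit `f(t−)` exists and `f(t−) ≤ f(t)` (no negative jumps). Then the running
infimum `m(t) := inf_{0≤s≤t} f(s)` is a continuous (and nonincreasing) function of `t`
on `[0,∞)`. -/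
theorem running_infimum_continuous_of_no_negative_jumps
    (f : ℝ → ℝ)
    (hrc : ∀ t : ℝ, 0 ≤ t → Tendsto f (nhdsWithin t (Set.Ioi t)) (nhds (f t)))
    (hll : ∀ t : ℝ, 0 < t →
        ∃ l : ℝ, Tendsto f (nhdsWithin t (Set.Iio t)) (nhds l) ∧ l ≤ f t) :
    ContinuousOn (fun t => sInf (f '' Set.Icc 0 t)) (Set.Ici (0:ℝ)) ∧
    AntitoneOn (fun t => sInf (f '' Set.Icc 0 t)) (Set.Ici (0:ℝ)) := by
  have hbdd := bddBelow_aux_running_inf f hrc hll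
  have hne : ∀ s : ℝ, 0 ≤ s → (f '' Set.Icc 0 s).Nonempty :=
    fun s hs => ⟨f 0, 0, ⟨le_refl 0, hs⟩, rfl⟩
  set m : ℝ → ℝ := fun t => sInf (f '' Set.Icc 0 t) with hm
  have hmle : ∀ t : ℝ, 0 ≤ t → ∀ u ∈ Set.Icc (0:ℝ) t, m t ≤ f u :=
    fun t ht u hu => csInf_le (hbdd t ht) (Set.mem_image_of_mem f hu)
  have hanti : AntitoneOn m (Set.Ici (0:ℝ)) := fun s hs t ht hst =>
    csInf_le_csInf (hbdd t ht) (hne s hs) (Set.image_mono (Set.Icc_subset_Icc_right hst))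
  refine ⟨?_, hanti⟩
  intro t ht
  have ht0 : (0:ℝ) ≤ t := ht
  have hright : Tendsto m (nhdsWithin t (Set.Ici t)) (nhds (m t)) := by
    rw [Metric.tendsto_nhds]
    intro ε hε
    have hmem : f ⁻¹' Set.Ioi (f t - ε/2) ∈ nhdsWithin t (Set.Ioi t) :=
      hrc t ht0 (Ioi_mem_nhds (by linarith))
    obtain ⟨b, hb, hsub⟩ := mem_nhdsGT_iff_exists_Ioo_subset.1 hmem
    simp only [Set.mem_Ioi] at hb
    filter_upwards [Ico_mem_nhdsGE_of_mem (Set.mem_Ico.2 ⟨le_refl t, hb⟩)] with s hs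
    have hs0 : 0 ≤ s := le_trans ht0 hs.1
    have h1 : m s ≤ m t := hanti ht hs0 hs.1
    have h2 : m t - ε/2 ≤ m s := by
      refine le_csInf (hne s hs0) ?_
      rintro y ⟨u, hu, rfl⟩
      rcases le_or_gt u t with hut | hut
      · have := hmle t ht0 u ⟨hu.1, hut⟩
        linarith
      · have : u ∈ Set.Ioo t b := ⟨hut, lt_of_le_of_lt hu.2 hs.2⟩
        have hfu := hsub this
        simp only [Set.mem_preimage, Set.mem_Ioi] at hfu
        have := hmle t ht0 t ⟨ht0, le_refl t⟩
        linarith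
    rw [Real.dist_eq, abs_sub_lt_iff]
    constructor <;> linarith
  rcases eq_or_lt_of_le ht0 with h0 | hpos
  · subst h0
    exact hright
  · have hleft : Tendsto m (nhdsWithin t (Set.Iio t)) (nhds (m t)) := by
      rw [Metric.tendsto_nhds]
      intro ε hε
      obtain ⟨l, hl, hlf⟩ := hll t hpos
      obtain ⟨y, ⟨u, hu, rfl⟩, hy⟩ :=
        exists_lt_of_csInf_lt (hne t ht0) (show sInf (f '' Set.Icc 0 t) < m t + ε/2 by
          simp only [hm]; linarith)
      rcases eq_or_lt_of_le hu.2 with hu2 | hu2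
      · -- u = t : use the left limit
        subst hu2
        have hft : f u < m u + ε/2 := hy
        have hlm : l < m u + ε/2 := lt_of_le_of_lt hlf hft
        have hmem : f ⁻¹' Set.Iio (m u + ε/2) ∈ nhdsWithin u (Set.Iio u) :=
          hl (Iio_mem_nhds hlm)
        obtain ⟨a, ha, hsub⟩ := mem_nhdsLT_iff_exists_Ioo_subset.1 hmem
        simp only [Set.mem_Iio] at ha
        have ha' : max a 0 < u := max_lt ha hpos
        have hIoo : Set.Ioo (max a 0) u ∈ nhdsWithin u (Set.Iio u) :=
          mem_nhdsLT_iff_exists_Ioo_subset.2 ⟨max a 0, ha', subset_rfl⟩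
        filter_upwards [hIoo] with s hs
        have hs0 : 0 ≤ s := le_trans (le_max_right a 0) hs.1.le
        have h1 : m u ≤ m s := hanti hs0 ht0 hs.2.le
        have hfs : f s < m u + ε/2 := by
          have : s ∈ Set.Ioo a u := ⟨lt_of_le_of_lt (le_max_left a 0) hs.1, hs.2⟩
          have := hsub this
          simpa using this
        have h2 : m s ≤ f s := hmle s hs0 s ⟨hs0, le_refl s⟩
        rw [Real.dist_eq, abs_sub_lt_iff]
        constructor <;> linarith
      · -- u < t
        have hIoo : Set.Ioo u t ∈ nhdsWithin t (Set.Iio t) :=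
          mem_nhdsLT_iff_exists_Ioo_subset.2 ⟨u, hu2, subset_rfl⟩
        filter_upwards [hIoo] with s hs
        have hs0 : 0 ≤ s := le_trans hu.1 hs.1.le
        have h1 : m t ≤ m s := hanti hs0 ht0 hs.2.le
        have h2 : m s ≤ f u := hmle s hs0 u ⟨hu.1, hs.1.le⟩
        rw [Real.dist_eq, abs_sub_lt_iff]
        constructor <;> linarith
    have hnt : Tendsto m (nhds t) (nhds (m t)) := by
      rw [← nhdsLT_sup_nhdsGE, tendsto_sup]
      exact ⟨hleft, hright⟩
    exact hnt.mono_left nhdsWithin_le_nhds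
end

section
/- Let f : [0,∞) → ℝ satisfy f(0) = 0, let f be right-continuous, and suppose that at every t > 0 the left limit f(t−) exists and f(t−) ≤ f(t) (no negative jumps). Let y ≥ 0 and suppose the set {t ≥ 0 : f(t) ≤ −y} is nonempty, and put T(y) := inf{t ≥ 0 : f(t) ≤ −y}. Then f(T(y)) = −y; that is, the first passage of f below level −y occurs by hitting the level exactly. -/
/-!
Let `T` be the first time `f` reaches `(-∞, -y]`. Right-continuity at `T` gives `f T ≤ -y`,
since `T` is approached from the right by (or is itself) a time at which `f ≤ -y`. Before `T`
we have `f > -y`, so the left limit at `T` is at least `-y`, and as `f` has no negative jumps,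
`f T ≥ -y`. At `T = 0` the lower bound is `f 0 = 0 ≥ -y` instead.
-/

open Filter Set Topology

section FirstPassage

variable {α β : Type*} [ConditionallyCompleteLinearOrder α] [TopologicalSpace α] [OrderTopology α]
  [TopologicalSpace β]

theorem apply_csInf_mem_of_tendsto_nhdsGT {f : α → β} {s : Set α} {K : Set β}
    (hK : IsClosed K) (hs : s.Nonempty) (hbdd : BddBelow s) (hsK : MapsTo f s K)
    (hf : Tendsto f (𝓝[>] (sInf s)) (𝓝 (f (sInf s)))) : f (sInf s) ∈ K :=
  hK.mem_of_frequently_of_tendsto (((isGLB_csInf hs hbdd).frequently_mem hs).mono fun _ ht => hsK ht)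
    (continuousWithinAt_Ioi_iff_Ici.mp hf)

theorem le_of_tendsto_nhdsLT_of_forall_Ioo [DenselyOrdered α] [Preorder β] [ClosedIciTopology β]
    {f : α → β} {a b : α} {c l : β} (hab : a < b)
    (hc : ∀ t ∈ Ioo a b, c ≤ f t) (hl : Tendsto f (𝓝[<] b) (𝓝 l)) : c ≤ l :=
  have := nhdsLT_neBot_of_exists_lt ⟨a, hab⟩
  ge_of_tendsto hl (eventually_of_mem (Ioo_mem_nhdsLT hab) hc)

end FirstPassage

/-- let `f : [0,∞) → ℝ` with `f(0) = 0` be right-continuous, with left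
limits existing at every `t > 0` and `f(t−) ≤ f(t)` (no negative jumps). Let `y ≥ 0`,
suppose `{t ≥ 0 : f(t) ≤ −y}` is nonempty, and put `T(y) := inf{t ≥ 0 : f(t) ≤ −y}`.
Then `f(T(y)) = −y`: the first passage below level `−y` occurs by hitting the level. -/
theorem first_passage_hits_level
    (f : ℝ → ℝ) (hf0 : f 0 = 0)
    (hrc : ∀ t : ℝ, 0 ≤ t → Tendsto f (nhdsWithin t (Set.Ioi t)) (nhds (f t)))
    (hll : ∀ t : ℝ, 0 < t →
        ∃ l : ℝ, Tendsto f (nhdsWithin t (Set.Iio t)) (nhds l) ∧ l ≤ f t)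
    (y : ℝ) (hy : 0 ≤ y)
    (hne : {t : ℝ | 0 ≤ t ∧ f t ≤ -y}.Nonempty) :
    f (sInf {t : ℝ | 0 ≤ t ∧ f t ≤ -y}) = -y := by
  set S := {t : ℝ | 0 ≤ t ∧ f t ≤ -y}
  have hbdd : BddBelow S := ⟨0, fun t ht => ht.1⟩
  have hT0 : 0 ≤ sInf S := le_csInf hne fun t ht => ht.1
  have upper : f (sInf S) ≤ -y :=
    apply_csInf_mem_of_tendsto_nhdsGT (K := Iic (-y)) isClosed_Iic hne hbdd
      (fun t ht => ht.2) (hrc _ hT0)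
  refine le_antisymm upper ?_
  rcases hT0.eq_or_lt with hT | hT
  · rw [← hT, hf0]
    linarith
  · obtain ⟨l, hl, hlf⟩ := hll _ hT
    have above : ∀ t ∈ Ioo 0 (sInf S), -y ≤ f t := fun t ht =>
      le_of_not_ge fun h => notMem_of_lt_csInf ht.2 hbdd ⟨ht.1.le, h⟩
    exact (le_of_tendsto_nhdsLT_of_forall_Ioo hT above hl).trans hlf
end

section
/- Let f : [0,∞) → ℝ with f(0) = 0 and let x ≥ 0. For each y ∈ [0,x] suppose the set {t ≥ 0 : f(t) ≤ −y} is nonempty, put T(y) := inf{t ≥ 0 : f(t) ≤ −y}, and assume f(T(y)) = −y. Let g : [0,∞) → ℝ be nondecreasing and set Y = f + g. Then inf_{0 ≤ s ≤ T(x)} Y(s) = inf_{0 ≤ y ≤ x} Y(T(y)); that is, the infimum of Y over [0, T(x)] is the same as the infimum of Y along the first-passage times of f. -/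
open Set

/-- let `f : [0,∞) → ℝ` with `f(0) = 0` and `x ≥ 0`. For each
`y ∈ [0,x]` suppose `{t ≥ 0 : f(t) ≤ −y}` is nonempty, put
`T(y) := inf{t ≥ 0 : f(t) ≤ −y}`, and assume `f(T(y)) = −y`. Let `g : [0,∞) → ℝ` be
nondecreasing and `Y = f + g`. Then `inf_{0≤s≤T(x)} Y(s) = inf_{0≤y≤x} Y(T(y))`. -/
theorem infimum_along_first_passage_times
    (f g : ℝ → ℝ) (hf0 : f 0 = 0) (x : ℝ) (hx : 0 ≤ x)
    (T : ℝ → ℝ)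
    (hT : ∀ y ∈ Set.Icc 0 x, T y = sInf {t : ℝ | 0 ≤ t ∧ f t ≤ -y})
    (hne : ∀ y ∈ Set.Icc 0 x, {t : ℝ | 0 ≤ t ∧ f t ≤ -y}.Nonempty)
    (hfT : ∀ y ∈ Set.Icc 0 x, f (T y) = -y)
    (hg : MonotoneOn g (Set.Ici (0:ℝ))) :
    sInf ((fun s => f s + g s) '' Set.Icc 0 (T x))
      = sInf ((fun y => f (T y) + g (T y)) '' Set.Icc 0 x) := by
  have hxmem : x ∈ Set.Icc 0 x := ⟨hx, le_rfl⟩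
  have h0mem : (0:ℝ) ∈ Set.Icc 0 x := ⟨le_rfl, hx⟩
  have hbd : ∀ y ∈ Set.Icc 0 x, BddBelow {t : ℝ | 0 ≤ t ∧ f t ≤ -y} :=
    fun y _ => ⟨0, fun t ht => ht.1⟩
  have hT0 : ∀ y ∈ Set.Icc 0 x, 0 ≤ T y := by
    intro y hy
    rw [hT y hy]
    exact le_csInf (hne y hy) (fun t ht => ht.1)
  have hTmono : ∀ y ∈ Set.Icc 0 x, T y ≤ T x := by
    intro y hy
    rw [hT y hy, hT x hxmem]
    refine csInf_le_csInf (hbd y hy) (hne x hxmem) ?_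
    intro t ht
    exact ⟨ht.1, ht.2.trans (by linarith [hy.2])⟩
  have hTx0 : 0 ≤ T x := hT0 x hxmem
  -- f is bounded below by -x on [0, T x]
  have hflb : ∀ t, 0 ≤ t → t ≤ T x → -x ≤ f t := by
    intro t ht0 htx
    by_contra h
    push_neg at h
    have hTle : T x ≤ t := by
      rw [hT x hxmem]; exact csInf_le (hbd x hxmem) ⟨ht0, h.le⟩
    have : t = T x := le_antisymm htx hTle
    rw [this, hfT x hxmem] at h
    exact lt_irrefl _ h
  -- bounds and nonemptiness of both infimum sets
  have hRbdd : BddBelow ((fun y => f (T y) + g (T y)) '' Set.Icc 0 x) := by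
    refine ⟨-x + g 0, ?_⟩
    rintro _ ⟨y, hy, rfl⟩
    have h1 : f (T y) = -y := hfT y hy
    have h2 : g 0 ≤ g (T y) := hg (Set.mem_Ici.mpr le_rfl) (hT0 y hy) (hT0 y hy)
    have : -x ≤ -y := by linarith [hy.2]
    show -x + g 0 ≤ f (T y) + g (T y)
    linarith [h1, h2]
  have hRne : ((fun y => f (T y) + g (T y)) '' Set.Icc 0 x).Nonempty :=
    ⟨_, Set.mem_image_of_mem _ h0mem⟩
  have hLbdd : BddBelow ((fun s => f s + g s) '' Set.Icc 0 (T x)) := by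
    refine ⟨-x + g 0, ?_⟩
    rintro _ ⟨t, ht, rfl⟩
    have h1 : -x ≤ f t := hflb t ht.1 ht.2
    have h2 : g 0 ≤ g t := hg (Set.mem_Ici.mpr le_rfl) ht.1 ht.1
    show -x + g 0 ≤ f t + g t
    linarith
  have hLne : ((fun s => f s + g s) '' Set.Icc 0 (T x)).Nonempty :=
    ⟨_, Set.mem_image_of_mem _ (⟨le_rfl, hTx0⟩ : (0:ℝ) ∈ Set.Icc 0 (T x))⟩
  apply le_antisymm
  · -- LHS ≤ RHS : the RHS image set is a subset of the LHS image set
    refine csInf_le_csInf hLbdd hRne ?_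
    rintro _ ⟨y, hy, rfl⟩
    exact ⟨T y, ⟨hT0 y hy, hTmono y hy⟩, rfl⟩
  · -- RHS ≤ LHS
    refine le_csInf hLne ?_
    rintro b ⟨s, hs, rfl⟩
    have hs0 : 0 ≤ s := hs.1
    have hsx : s ≤ T x := hs.2
    -- m = infimum of f on [0, s]
    set A := f '' Set.Icc 0 s with hA
    have hAne : A.Nonempty := ⟨f 0, Set.mem_image_of_mem f ⟨le_rfl, hs0⟩⟩
    have hAbdd : BddBelow A := by
      refine ⟨-x, ?_⟩
      rintro _ ⟨t, ht, rfl⟩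
      exact hflb t ht.1 (ht.2.trans hsx)
    set m := sInf A with hm
    have hm_le_f0 : m ≤ 0 := by
      have := csInf_le hAbdd (⟨0, ⟨le_rfl, hs0⟩, rfl⟩ : f 0 ∈ A)
      rwa [hf0] at this
    have hm_le_fs : m ≤ f s := csInf_le hAbdd ⟨s, ⟨hs0, le_rfl⟩, rfl⟩
    have hmx : -x ≤ m := by
      refine le_csInf hAne ?_
      rintro _ ⟨t, ht, rfl⟩
      exact hflb t ht.1 (ht.2.trans hsx)
    -- key step: if f drops below -z on [0,s], then the RHS inf is ≤ -z + g s
    have key : ∀ z, 0 ≤ z → z ≤ x → (∃ t, 0 ≤ t ∧ t ≤ s ∧ f t ≤ -z) →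
        sInf ((fun y => f (T y) + g (T y)) '' Set.Icc 0 x) ≤ -z + g s := by
      rintro z hz0 hzx ⟨t, ht0, hts, hft⟩
      have hzmem : z ∈ Set.Icc 0 x := ⟨hz0, hzx⟩
      have hTzs : T z ≤ s := by
        rw [hT z hzmem]
        exact (csInf_le (hbd z hzmem) ⟨ht0, hft⟩).trans hts
      have h1 : sInf ((fun y => f (T y) + g (T y)) '' Set.Icc 0 x)
          ≤ f (T z) + g (T z) := csInf_le hRbdd ⟨z, hzmem, rfl⟩
      have h2 : g (T z) ≤ g s := hg (hT0 z hzmem) hs0 hTzs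
      rw [hfT z hzmem] at h1
      linarith
    -- first: RHS inf ≤ g s (case z = 0)
    have h0 : sInf ((fun y => f (T y) + g (T y)) '' Set.Icc 0 x) ≤ g s := by
      have := key 0 le_rfl hx ⟨0, le_rfl, hs0, by rw [hf0]; norm_num⟩
      linarith
    -- main: RHS inf ≤ m + g s
    have hfinal : sInf ((fun y => f (T y) + g (T y)) '' Set.Icc 0 x) ≤ m + g s := by
      by_contra hcon
      push_neg at hcon
      set R := sInf ((fun y => f (T y) + g (T y)) '' Set.Icc 0 x) with hR
      -- then m < 0, pick z strictly between g s - R and -m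
      have hm0 : m < 0 := by linarith
      set z := ((g s - R) + (-m)) / 2 with hz
      have hz1 : g s - R < z := by
        have : g s - R < -m := by linarith
        linarith
      have hz2 : z < -m := by
        have : g s - R < -m := by linarith
        linarith
      have hz0 : 0 ≤ z := by linarith
      have hzx : z ≤ x := by linarith
      obtain ⟨a, haA, ha⟩ := exists_lt_of_csInf_lt hAne (show m < -z by linarith)
      obtain ⟨t, ht, rfl⟩ := haA
      have := key z hz0 hzx ⟨t, ht.1, ht.2, ha.le⟩
      linarith
    show sInf ((fun y => f (T y) + g (T y)) '' Set.Icc 0 x) ≤ f s + g s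
    linarith
end

section
/- Let L : [0,∞) → [0,∞) be continuous and nondecreasing with L(0) = 0, and let μ_L be its Lebesgue–Stieltjes measure on [0,∞) (so μ_L((a,b]) = L(b) − L(a) for 0 ≤ a ≤ b, and μ_L({0}) = 0). Let x ≥ 0 and suppose there exists t with L(t) ≥ x; for y ∈ [0,x] put T(y) := inf{t ≥ 0 : L(t) ≥ y}. Then for every measurable h : [0,∞) → [0,∞], ∫_{[0,T(x)]} h(s) μ_L(ds) = ∫_{[0,x]} h(T(y)) dy, where dy denotes Lebesgue measure. (This is the change of variables used to rewrite ∫_0^{T(x)} h(s) dL(s) as ∫_0^x h(T(y)) dy.) -/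
open MeasureTheory Set
open scoped ENNReal

/-- let `L : [0,∞) → [0,∞)` be continuous and nondecreasing with
`L(0) = 0` and Lebesgue–Stieltjes measure `μ_L` (so `μ_L((a,b]) = L(b) − L(a)` for
`0 ≤ a ≤ b` and `μ_L({0}) = 0`). Let `x ≥ 0` with `L(t) ≥ x` for some `t`, and put
`T(y) := inf{t ≥ 0 : L(t) ≥ y}` for `y ∈ [0,x]`. Then for every measurable
`h : [0,∞) → [0,∞]`, `∫_{[0,T(x)]} h(s) μ_L(ds) = ∫_{[0,x]} h(T(y)) dy`. -/
theorem stieltjes_change_of_variables_inverse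
    (L : ℝ → ℝ) (hLmono : Monotone L) (hLcont : Continuous L)
    (hL0 : L 0 = 0) (hLneg : ∀ t ≤ (0:ℝ), L t = 0)
    (μ : Measure ℝ)
    (hμ : ∀ a b : ℝ, 0 ≤ a → a ≤ b → μ (Set.Ioc a b) = ENNReal.ofReal (L b - L a))
    (hμ0 : μ {0} = 0) (hμneg : μ (Set.Iio 0) = 0)
    (x : ℝ) (hx : 0 ≤ x) (hex : ∃ t, x ≤ L t)
    (T : ℝ → ℝ) (hT : ∀ y ∈ Set.Icc 0 x, T y = sInf {t : ℝ | 0 ≤ t ∧ y ≤ L t})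
    (h : ℝ → ℝ≥0∞) (hh : Measurable h) :
    ∫⁻ s in Set.Icc 0 (T x), h s ∂μ = ∫⁻ y in Set.Icc 0 x, h (T y) := by
  obtain ⟨t₀', ht₀'⟩ := hex
  set t₀ : ℝ := max t₀' 0 with ht₀def
  have ht₀0 : (0:ℝ) ≤ t₀ := le_max_right _ _
  have ht₀ : x ≤ L t₀ := le_trans ht₀' (hLmono (le_max_left _ _))
  -- the globally defined inverse
  set S : ℝ → Set ℝ := fun y => {t : ℝ | 0 ≤ t ∧ min y x ≤ L t} with hSdef
  set T' : ℝ → ℝ := fun y => sInf (S y) with hT'def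
  have hSne : ∀ y, (S y).Nonempty := fun y =>
    ⟨t₀, ht₀0, le_trans (min_le_right y x) ht₀⟩
  have hSbdd : ∀ y, BddBelow (S y) := fun y => ⟨0, fun t ht => ht.1⟩
  have hSclosed : ∀ y, IsClosed (S y) := by
    intro y
    have : S y = Ici 0 ∩ L ⁻¹' Ici (min y x) := by
      ext t; simp [hSdef, and_comm]
    rw [this]
    exact isClosed_Ici.inter (isClosed_Ici.preimage hLcont)
  have hT'mem : ∀ y, T' y ∈ S y := fun y =>
    (hSclosed y).csInf_mem (hSne y) (hSbdd y)
  have hT'nonneg : ∀ y, 0 ≤ T' y := fun y => (hT'mem y).1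
  have hT'le : ∀ y b, 0 ≤ b → min y x ≤ L b → T' y ≤ b := fun y b hb hLb =>
    csInf_le (hSbdd y) ⟨hb, hLb⟩
  have hT'iff : ∀ y b, 0 ≤ b → (T' y ≤ b ↔ min y x ≤ L b) := by
    intro y b hb
    constructor
    · intro hle
      exact le_trans (hT'mem y).2 (hLmono hle)
    · exact hT'le y b hb
  have hT'mono : Monotone T' := by
    intro y₁ y₂ hle
    exact le_csInf (hSne y₂) fun t ht =>
      csInf_le (hSbdd y₁) ⟨ht.1, le_trans (min_le_min hle le_rfl) ht.2⟩
  have hT'meas : Measurable T' := hT'mono.measurable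
  -- T agrees with T' on [0,x]
  have hTT' : ∀ y ∈ Icc 0 x, T y = T' y := by
    intro y hy
    rw [hT y hy]
    congr 1
    ext t
    simp only [hSdef, mem_setOf_eq, min_eq_left hy.2]
  have hTx : T x = T' x := hTT' x ⟨hx, le_rfl⟩
  -- L (T' x) = x
  have hLTx : L (T' x) = x := by
    have h1 : x ≤ L (T' x) := by
      have := (hT'mem x).2; rwa [min_self] at this
    have h2 : x ∈ Icc (L 0) (L (T' x)) := ⟨by rw [hL0]; exact hx, h1⟩
    obtain ⟨c, hc, hLc⟩ := intermediate_value_Icc (hT'nonneg x) hLcont.continuousOn h2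
    have : T' x ≤ c := hT'le x c hc.1 (by rw [min_self]; exact hLc.ge)
    have h3 : L (T' x) ≤ x := by
      calc L (T' x) ≤ L c := hLmono this
        _ = x := hLc
    exact le_antisymm h3 h1
  -- μ(Icc 0 c) = ofReal (L c) for 0 ≤ c
  have hμIcc : ∀ c : ℝ, 0 ≤ c → μ (Icc 0 c) = ENNReal.ofReal (L c) := by
    intro c hc
    have : Icc 0 c = {0} ∪ Ioc 0 c := by
      ext t; constructor
      · rintro ⟨h1, h2⟩
        rcases eq_or_lt_of_le h1 with rfl | h1
        · exact Or.inl rfl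
        · exact Or.inr ⟨h1, h2⟩
      · rintro (rfl | ⟨h1, h2⟩)
        · exact ⟨le_rfl, hc⟩
        · exact ⟨h1.le, h2⟩
    rw [this, measure_union _ measurableSet_Ioc, hμ0, hμ 0 c le_rfl hc, hL0, zero_add,
      sub_zero]
    · exact Set.disjoint_left.2 (by rintro t rfl ⟨ht, _⟩; exact lt_irrefl _ ht)
  set ρ : Measure ℝ := volume.restrict (Icc 0 x) with hρdef
  have hfin : IsFiniteMeasure (Measure.map T' ρ) := by
    constructor
    rw [Measure.map_apply hT'meas MeasurableSet.univ]
    simp [hρdef]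
  have hμfin : IsFiniteMeasure (μ.restrict (Icc 0 (T' x))) := by
    constructor
    rw [Measure.restrict_apply MeasurableSet.univ, Set.univ_inter,
      hμIcc _ (hT'nonneg x)]
    exact ENNReal.ofReal_lt_top
  -- the key measure identity
  have hkey : Measure.map T' ρ = μ.restrict (Icc 0 (T' x)) := by
    refine Measure.ext_of_Iic _ _ fun b => ?_
    rw [Measure.map_apply hT'meas measurableSet_Iic, Measure.restrict_apply measurableSet_Iic,
      hρdef, Measure.restrict_apply (hT'meas measurableSet_Iic)]
    rcases lt_or_ge b 0 with hb | hb
    · have h1 : T' ⁻¹' Iic b ∩ Icc 0 x = ∅ := by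
        ext y
        simp only [mem_inter_iff, mem_preimage, mem_Iic, mem_empty_iff_false, iff_false]
        rintro ⟨h1, -⟩
        exact absurd (le_trans (hT'nonneg y) h1) (not_le.2 hb)
      have h2 : Iic b ∩ Icc 0 (T' x) = ∅ := by
        ext y
        simp only [mem_inter_iff, mem_Iic, mem_Icc, mem_empty_iff_false, iff_false]
        rintro ⟨h1, h2, -⟩
        exact absurd (le_trans h2 h1) (not_le.2 hb)
      rw [h1, h2, measure_empty, measure_empty]
    · have hLb : 0 ≤ L b := hL0 ▸ hLmono hb
      have h1 : T' ⁻¹' Iic b ∩ Icc 0 x = Icc 0 (min x (L b)) := by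
        ext y
        simp only [mem_inter_iff, mem_preimage, mem_Iic, mem_Icc, le_min_iff]
        constructor
        · rintro ⟨h1, h2, h3⟩
          refine ⟨h2, h3, ?_⟩
          have := (hT'iff y b hb).1 h1
          rwa [min_eq_left h3] at this
        · rintro ⟨h1, h2, h3⟩
          exact ⟨(hT'iff y b hb).2 (by rwa [min_eq_left h2]), h1, h2⟩
      have h2 : Iic b ∩ Icc 0 (T' x) = Icc 0 (min (T' x) b) := by
        ext y
        simp only [mem_inter_iff, mem_Iic, mem_Icc, le_min_iff]
        tauto
      rw [h1, h2, hμIcc _ (le_min (hT'nonneg x) hb), Real.volume_Icc, sub_zero]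
      congr 1
      rcases le_total b (T' x) with hc | hc
      · rw [min_eq_right hc]
        have : L b ≤ x := hLTx ▸ hLmono hc
        rw [min_eq_right this]
      · rw [min_eq_left hc]
        have : x ≤ L b := hLTx ▸ hLmono hc
        rw [min_eq_left this, hLTx]
  calc ∫⁻ s in Icc 0 (T x), h s ∂μ
      = ∫⁻ s, h s ∂(μ.restrict (Icc 0 (T' x))) := by rw [hTx]
    _ = ∫⁻ s, h s ∂(Measure.map T' ρ) := by rw [hkey]
    _ = ∫⁻ y, h (T' y) ∂ρ := lintegral_map hh hT'meas
    _ = ∫⁻ y in Icc 0 x, h (T y) := by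
        refine lintegral_congr_ae ?_
        filter_upwards [ae_restrict_mem measurableSet_Icc] with y hy
        rw [hTT' y hy]
end
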